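/- Let H_C be an n-dimensional Hilbert space with orthonormal basis {|i⟩}, H a finite-dimensional Hilbert space, and F_1,...,F_n operator-valued functions in H over finite sets Δ_1,...,Δ_n. Define F over the product Δ_1×···×Δ_n by F(δ_1,...,δ_n)(∑_i |i⟩⊗|ψ_i⟩) = ∑_i (∏_{k≠i} λ_{kδ_k}) |i⟩⊗(F_i(δ_i)|ψ_i⟩), with λ_{kδ_k} = sqrt( tr(F_k(δ_k)†F_k(δ_k)) / ∑_{τ∈Δ_k} tr(F_k(τ)†F_k(τ)) ). Then ∑_{(δ_1,...,δ_n)} F(δ_1,...,δ_n)† F(δ_1,...,δ_n) ⊑ I_{H_C⊗H}; i.e., F is an operator-valued function in H_C ⊗ H. -/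

import Mathlib

noncomputable section
open scoped InnerProductSpace
open Finset

/-- Coordinate model of the tensor product `H_C ⊗ H` along a fixed orthonormal
basis of the `n`-dimensional coin space `H_C`. -/
abbrev TensorSp (n : ℕ) (H : Type*) [NormedAddCommGroup H] [InnerProductSpace ℂ H] : Type _ :=
  PiLp 2 (fun _ : Fin n => H)

variable {n : ℕ} {H : Type*} [NormedAddCommGroup H] [InnerProductSpace ℂ H]

/-- the pure tensor `c ⊗ ψ`. -/
def pureTensor (c : EuclideanSpace ℂ (Fin n)) (ψ : H) : TensorSp n H :=
  WithLp.toLp 2 (fun i => c i • ψ)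

/-- the block-diagonal operator `∑ᵢ |i⟩⟨i| ⊗ Uᵢ`, i.e. the guarded composition of
the `Uᵢ` along the computational basis of the coin space. -/
def blockDiag (U : Fin n → (H →ₗ[ℂ] H)) : TensorSp n H →ₗ[ℂ] TensorSp n H where
  toFun x := WithLp.toLp 2 (fun i => U i (x i))
  map_add' x y := by ext i; simp [map_add]
  map_smul' c x := by ext i; simp [map_smul]

/-- `A ⊗ B` in the coordinate model, `A` acting on the coin space. -/
def tensorOp (A : EuclideanSpace ℂ (Fin n) →ₗ[ℂ] EuclideanSpace ℂ (Fin n))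
    (B : H →ₗ[ℂ] H) : TensorSp n H →ₗ[ℂ] TensorSp n H where
  toFun x := WithLp.toLp 2 (fun i => ∑ b : Fin n, A (EuclideanSpace.single b 1) i • B (x b))
  map_add' x y := by
    ext i; simp [map_add, smul_add, Finset.sum_add_distrib]
  map_smul' c x := by
    ext i; simp [map_smul, Finset.smul_sum, smul_comm c]

/-- `A ⊗ I_H`. -/
def tensorLeft (A : EuclideanSpace ℂ (Fin n) →ₗ[ℂ] EuclideanSpace ℂ (Fin n)) :
    TensorSp n H →ₗ[ℂ] TensorSp n H :=
  tensorOp A LinearMap.id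

/-- A linear operator is unitary iff it preserves inner products and is bijective. -/
def IsUnitaryOp {E : Type*} [NormedAddCommGroup E] [InnerProductSpace ℂ E]
    (A : E →ₗ[ℂ] E) : Prop :=
  (∀ x y : E, ⟪A x, A y⟫_ℂ = ⟪x, y⟫_ℂ) ∧ Function.Bijective A

/-- Positive (semidefinite) operator. -/
def IsPosOp {E : Type*} [NormedAddCommGroup E] [InnerProductSpace ℂ E]
    (A : E →ₗ[ℂ] E) : Prop :=
  ∀ x : E, (⟪x, A x⟫_ℂ).im = 0 ∧ 0 ≤ (⟪x, A x⟫_ℂ).re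

/-- Löwner order `A ⊑ B`. -/
def Loewner {E : Type*} [NormedAddCommGroup E] [InnerProductSpace ℂ E]
    (A B : E →ₗ[ℂ] E) : Prop :=
  IsPosOp (B - A)

section guarded
variable [FiniteDimensional ℂ H] {Δ : Fin n → Type*} [∀ k, Fintype (Δ k)]

/-- the coefficients `λ_{kδ}`. -/
def lam (F : ∀ k, Δ k → (H →ₗ[ℂ] H)) (k : Fin n) (δ : Δ k) : ℝ :=
  Real.sqrt ((LinearMap.trace ℂ H (LinearMap.adjoint (F k δ) ∘ₗ F k δ)).re /
    ∑ τ : Δ k, (LinearMap.trace ℂ H (LinearMap.adjoint (F k τ) ∘ₗ F k τ)).re)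

/-- the guarded composition `□ᵢ |i⟩ → Fᵢ` of operator-valued functions, evaluated at
`⊕ᵢ δᵢ`. -/
def guardedComp (F : ∀ k, Δ k → (H →ₗ[ℂ] H)) (δ : ∀ k, Δ k) :
    TensorSp n H →ₗ[ℂ] TensorSp n H where
  toFun x := WithLp.toLp 2 (fun i => (∏ k ∈ Finset.univ.erase i, lam F k (δ k)) • F i (δ i) (x i))
  map_add' x y := by ext i; simp [map_add, smul_add]
  map_smul' c x := by
    ext i; simp [map_smul, smul_comm c]

end guarded

/-- partial trace over the coin space of an operator on `H_C ⊗ H`. -/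
def coinProj (i : Fin n) : TensorSp n H →ₗ[ℂ] H where
  toFun x := x i
  map_add' _ _ := rfl
  map_smul' _ _ := rfl

def coinIncl (i : Fin n) : H →ₗ[ℂ] TensorSp n H where
  toFun ψ := WithLp.toLp 2 (Pi.single i ψ)
  map_add' x y := by ext j; simp only [WithLp.ofLp_add, Pi.add_apply, Pi.single_add]
  map_smul' c x := by ext j; simp only [WithLp.ofLp_smul, Pi.smul_apply, Pi.single_smul, RingHom.id_apply]

def trCoin (A : TensorSp n H →ₗ[ℂ] TensorSp n H) : H →ₗ[ℂ] H :=
  ∑ i : Fin n, coinProj i ∘ₗ A ∘ₗ coinIncl i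

/-- the outer product `|x⟩⟨y|`. -/
def outer {E : Type*} [NormedAddCommGroup E] [InnerProductSpace ℂ E]
    (x y : E) : E →ₗ[ℂ] E :=
  ((innerSL ℂ y).toLinearMap).smulRight x

/- `∑_δ T(δ)†T(δ) ⊑ I` means `∑_δ ‖T(δ) x‖² ≤ ‖x‖²` for every `x`. Each `λ_{k·}²` is a
probability distribution on `Δ_k`, so in
`∑_δ ‖F(δ) x‖² = ∑_δ ∑_i (∏_{k≠i} λ_{kδ_k}²) ‖F_i(δ_i) x_i‖²` the weights of the coordinates
`k ≠ i` sum out to `1`, leaving `∑_i ∑_{d ∈ Δ_i} ‖F_i(d) x_i‖² ≤ ∑_i ‖x_i‖² = ‖x‖²`. -/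

section Loewner
variable {E : Type*} [NormedAddCommGroup E] [InnerProductSpace ℂ E] [FiniteDimensional ℂ E]
  {ι : Type*} [Fintype ι]

lemma inner_id_sub_sum_adjoint_comp_self (T : ι → (E →ₗ[ℂ] E)) (x : E) :
    ⟪x, (LinearMap.id - ∑ δ, LinearMap.adjoint (T δ) ∘ₗ T δ : E →ₗ[ℂ] E) x⟫_ℂ
      = ((‖x‖ ^ 2 - ∑ δ, ‖T δ x‖ ^ 2 : ℝ) : ℂ) := by
  simp only [LinearMap.sub_apply, LinearMap.id_apply, LinearMap.sum_apply, LinearMap.comp_apply,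
    inner_sub_right, inner_sum, LinearMap.adjoint_inner_right, inner_self_eq_norm_sq_to_K]
  push_cast
  rfl

lemma loewner_sum_adjoint_comp_self_id_iff (T : ι → (E →ₗ[ℂ] E)) :
    Loewner (∑ δ, LinearMap.adjoint (T δ) ∘ₗ T δ) LinearMap.id ↔
      ∀ x, ∑ δ, ‖T δ x‖ ^ 2 ≤ ‖x‖ ^ 2 := by
  simp only [Loewner, IsPosOp, inner_id_sub_sum_adjoint_comp_self, Complex.ofReal_im,
    Complex.ofReal_re, sub_nonneg, true_and]

end Loewner

lemma Finset.sum_pi_prod_erase_mul {R ι : Type*} [CommSemiring R] [Fintype ι] [DecidableEq ι]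
    {Δ : ι → Type*} [∀ k, Fintype (Δ k)] (w : ∀ k, Δ k → R) (hw : ∀ k, ∑ d, w k d = 1) (i : ι)
    (g : Δ i → R) :
    ∑ δ : ∀ k, Δ k, (∏ k ∈ univ.erase i, w k (δ k)) * g (δ i) = ∑ d, g d := by
  have hprod (δ : ∀ k, Δ k) :
      (∏ k ∈ univ.erase i, w k (δ k)) * g (δ i) = ∏ k, Function.update w i g k (δ k) := by
    rw [← mul_prod_erase univ _ (mem_univ i), Function.update_self, mul_comm]
    congr 1
    exact prod_congr rfl fun k hk => by rw [Function.update_of_ne (ne_of_mem_erase hk)]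
  rw [sum_congr rfl fun δ _ => hprod δ, ← Fintype.prod_sum, ← mul_prod_erase univ _ (mem_univ i),
    Function.update_self]
  rw [prod_congr rfl fun k hk => by rw [Function.update_of_ne (ne_of_mem_erase hk), hw k],
    prod_const_one, mul_one]

section GuardedComp
variable [FiniteDimensional ℂ H] {Δ : Fin n → Type*} [∀ k, Fintype (Δ k)]

lemma re_trace_adjoint_comp_self_nonneg (A : H →ₗ[ℂ] H) :
    0 ≤ (LinearMap.trace ℂ H (LinearMap.adjoint A ∘ₗ A)).re :=
  (Complex.nonneg_iff.mp A.isPositive_adjoint_comp_self.trace_nonneg).1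

lemma sum_lam_sq (F : ∀ k, Δ k → (H →ₗ[ℂ] H)) (k : Fin n)
    (hden : (∑ τ : Δ k,
      (LinearMap.trace ℂ H (LinearMap.adjoint (F k τ) ∘ₗ F k τ)).re) ≠ 0) :
    ∑ δ : Δ k, lam F k δ ^ 2 = 1 := by
  have hsum_nonneg := sum_nonneg fun τ (_ : τ ∈ univ) => re_trace_adjoint_comp_self_nonneg (F k τ)
  simp only [lam, Real.sq_sqrt (div_nonneg (re_trace_adjoint_comp_self_nonneg _) hsum_nonneg)]
  rw [← sum_div, div_self hden]

lemma norm_guardedComp_apply_sq (F : ∀ k, Δ k → (H →ₗ[ℂ] H)) (δ : ∀ k, Δ k)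
    (x : TensorSp n H) :
    ‖guardedComp F δ x‖ ^ 2
      = ∑ i, (∏ k ∈ univ.erase i, lam F k (δ k) ^ 2) * ‖F i (δ i) (x i)‖ ^ 2 := by
  rw [PiLp.norm_sq_eq_of_L2]
  refine sum_congr rfl fun i _ => ?_
  change ‖(∏ k ∈ univ.erase i, lam F k (δ k)) • F i (δ i) (x i)‖ ^ 2 = _
  rw [norm_smul, Real.norm_eq_abs, mul_pow, sq_abs, prod_pow]

lemma sum_norm_guardedComp_apply_sq (F : ∀ k, Δ k → (H →ₗ[ℂ] H))
    (hden : ∀ k, (∑ τ : Δ k,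
      (LinearMap.trace ℂ H (LinearMap.adjoint (F k τ) ∘ₗ F k τ)).re) ≠ 0) (x : TensorSp n H) :
    ∑ δ : ∀ k, Δ k, ‖guardedComp F δ x‖ ^ 2 = ∑ i, ∑ d : Δ i, ‖F i d (x i)‖ ^ 2 := by
  simp only [norm_guardedComp_apply_sq]
  rw [sum_comm]
  exact sum_congr rfl fun i _ =>
    sum_pi_prod_erase_mul _ (fun k => sum_lam_sq F k (hden k)) i fun d => ‖F i d (x i)‖ ^ 2

end GuardedComp

/-- the guarded composition of operator-valued functions is an
operator-valued function on `H_C ⊗ H`. -/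
theorem guardedComp_isOperatorValuedFunction {n : ℕ} {H : Type*} [NormedAddCommGroup H]
    [InnerProductSpace ℂ H] [FiniteDimensional ℂ H]
    {Δ : Fin n → Type*} [∀ k, Fintype (Δ k)] (F : ∀ k, Δ k → (H →ₗ[ℂ] H))
    (hovf : ∀ k, Loewner (∑ δ : Δ k, LinearMap.adjoint (F k δ) ∘ₗ F k δ) LinearMap.id)
    (hden : ∀ k, (∑ τ : Δ k,
      (LinearMap.trace ℂ H (LinearMap.adjoint (F k τ) ∘ₗ F k τ)).re) ≠ 0) :
    Loewner (∑ δ : (∀ k, Δ k),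
        LinearMap.adjoint (guardedComp F δ) ∘ₗ guardedComp F δ) LinearMap.id := by
  rw [loewner_sum_adjoint_comp_self_id_iff]
  intro x
  rw [sum_norm_guardedComp_apply_sq F hden, PiLp.norm_sq_eq_of_L2]
  exact sum_le_sum fun i _ => (loewner_sum_adjoint_comp_self_id_iff (F i)).mp (hovf i) (x i)
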